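/- Let N ≥ 2, let k ≥ 1, and let A_1, ..., A_k be symmetric N×N real matrices with nonnegative entries, zero diagonal, positive weighted degrees, and connected underlying graphs. Let T_j = T(A_j, 1) be the corresponding birth-death transition matrices at fitness r = 1, and let τ_1, ..., τ_k ≥ 1 be integers. If x : ({0,1}^N) → ℝ satisfies x(0,...,0) = 0, x(1,...,1) = 1, and x = (T_1)^{τ_1} (T_2)^{τ_2} ⋯ (T_k)^{τ_k} x, then Σ_{i=1}^{N} x(e_i) = 1, where e_i denotes the state with a mutant at node i only; hence the fixation probability of a single uniformly-placed mutant equals 1/N. -/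

import Mathlib

/-- Number of mutant nodes in state `s`. -/
def mCount {N : ℕ} (s : Fin N → Bool) : ℕ :=
  (Finset.univ.filter (fun v => s v = true)).card

/-- Weighted degree (strength) of node `u` in the weighted network `A`. -/
def wdeg {N : ℕ} (A : Matrix (Fin N) (Fin N) ℝ) (u : Fin N) : ℝ := ∑ v, A u v

/-- Off-diagonal entries of the birth-death transition matrix: nonzero only between states
differing at exactly one node `v`; the value depends on whether the mutant set gains or
loses node `v`. -/
noncomputable def bdOff {N : ℕ} (A : Matrix (Fin N) (Fin N) ℝ) (r : ℝ)
    (s s' : Fin N → Bool) : ℝ :=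
  if h : ∃ v : Fin N, s v ≠ s' v ∧ ∀ u : Fin N, u ≠ v → s u = s' u then
    if s h.choose = false then
      (r / (r * (mCount s : ℝ) + ((N : ℝ) - (mCount s : ℝ)))) *
        ∑ u ∈ Finset.univ.filter (fun u => s u = true), A u h.choose / wdeg A u
    else
      (1 / (r * (mCount s : ℝ) + ((N : ℝ) - (mCount s : ℝ)))) *
        ∑ u ∈ Finset.univ.filter (fun u => s u = false), A u h.choose / wdeg A u
  else 0

/-- The birth-death transition matrix `T(A, r)` on the state space `{0,1}^N`:
diagonal entries make every row sum to `1`. -/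
noncomputable def bdT {N : ℕ} (A : Matrix (Fin N) (Fin N) ℝ) (r : ℝ) :
    Matrix (Fin N → Bool) (Fin N → Bool) ℝ :=
  fun s s' =>
    if s' = s then 1 - ∑ t : Fin N → Bool, bdOff A r s t else bdOff A r s s'

/-- The underlying graph of the weight matrix `A`: nodes `u ≠ v` are adjacent whenever the
edge weight between them is positive. -/
def uGraph {N : ℕ} (A : Matrix (Fin N) (Fin N) ℝ) : SimpleGraph (Fin N) where
  Adj u v := u ≠ v ∧ 0 < A u v ∧ 0 < A v u
  symm := ⟨fun _u _v h => ⟨h.1.symm, h.2.2, h.2.1⟩⟩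
  loopless := ⟨fun _u h => h.1 rfl⟩

/-! ### auxiliary development -/

/-- flip state `s` at node `v` -/
def flipAt {N : ℕ} (s : Fin N → Bool) (v : Fin N) : Fin N → Bool :=
  Function.update s v (!(s v))

lemma flipAt_ne {N : ℕ} (s : Fin N → Bool) (v : Fin N) : flipAt s v ≠ s := by
  intro h
  have := congrFun h v
  simp [flipAt] at this

lemma flipAt_injective {N : ℕ} (s : Fin N → Bool) : Function.Injective (flipAt s) := by
  intro v w h
  by_contra hne
  have h1 := congrFun h v
  simp [flipAt, Function.update_apply, hne] at h1

lemma bdOff_flip {N : ℕ} (A : Matrix (Fin N) (Fin N) ℝ) (s : Fin N → Bool) (v : Fin N) :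
    bdOff A 1 s (flipAt s v) =
      (1 / (N : ℝ)) * ∑ u ∈ Finset.univ.filter (fun u => s u = !(s v)), A u v / wdeg A u := by
  have hv : s v ≠ flipAt s v v := by simp [flipAt]
  have h : ∃ w : Fin N, s w ≠ flipAt s v w ∧ ∀ u : Fin N, u ≠ w → s u = flipAt s v u :=
    ⟨v, hv, fun u hu => by simp [flipAt, Function.update_apply, hu]⟩
  rw [bdOff, dif_pos h]
  have hch : h.choose = v := by
    by_contra hne
    exact hv (h.choose_spec.2 v (fun hvv => hne hvv.symm))
  rw [hch]
  have hden : (1 : ℝ) * (mCount s : ℝ) + ((N : ℝ) - (mCount s : ℝ)) = (N : ℝ) := by ring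
  rcases Bool.eq_false_or_eq_true (s v) with hb | hb
  · rw [if_neg (by simp [hb]), hden, hb]; norm_num
  · rw [if_pos hb, hden, hb]; norm_num

lemma bdOff_eq_zero_of_not_flip {N : ℕ} (A : Matrix (Fin N) (Fin N) ℝ) (r : ℝ)
    (s s' : Fin N → Bool) (hs : ∀ v, s' ≠ flipAt s v) : bdOff A r s s' = 0 := by
  rw [bdOff, dif_neg]
  rintro ⟨v, hv, hu⟩
  apply hs v
  funext w
  by_cases hw : w = v
  · subst hw
    simp only [flipAt, Function.update_self]
    rcases Bool.eq_false_or_eq_true (s w) with hb | hb <;>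
      · rw [hb]; rw [hb] at hv; revert hv; cases s' w <;> simp
  · rw [← hu w hw]; simp [flipAt, Function.update_apply, hw]

/-- rewrite a sum over all states weighted by `bdOff` as a sum over single-node flips -/
lemma sum_bdOff_mul {N : ℕ} (A : Matrix (Fin N) (Fin N) ℝ) (r : ℝ) (s : Fin N → Bool)
    (g : (Fin N → Bool) → ℝ) :
    ∑ t : Fin N → Bool, bdOff A r s t * g t
      = ∑ v : Fin N, bdOff A r s (flipAt s v) * g (flipAt s v) := by
  have himg : ∑ v : Fin N, bdOff A r s (flipAt s v) * g (flipAt s v)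
      = ∑ t ∈ Finset.univ.image (flipAt s), bdOff A r s t * g t :=
    (Finset.sum_image (f := fun t => bdOff A r s t * g t)
      (fun v _ w _ h => flipAt_injective s h)).symm
  rw [himg]
  apply (Finset.sum_subset (Finset.subset_univ _) _).symm
  intro t _ ht
  have hnf : ∀ v, t ≠ flipAt s v := by
    intro v hv
    exact ht (Finset.mem_image.2 ⟨v, Finset.mem_univ v, hv.symm⟩)
  rw [bdOff_eq_zero_of_not_flip A r s t hnf, zero_mul]

lemma bdT_mulVec {N : ℕ} (A : Matrix (Fin N) (Fin N) ℝ) (s : Fin N → Bool)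
    (g : (Fin N → Bool) → ℝ) :
    (bdT A 1).mulVec g s
      = (1 - ∑ v : Fin N, bdOff A 1 s (flipAt s v)) * g s
        + ∑ v : Fin N, bdOff A 1 s (flipAt s v) * g (flipAt s v) := by
  have hdiag : bdOff A 1 s s = 0 :=
    bdOff_eq_zero_of_not_flip A 1 s s (fun v h => flipAt_ne s v h.symm)
  have key : ∀ t, bdT A 1 s t = (if t = s then (1 - ∑ v, bdOff A 1 s (flipAt s v)) else 0)
      + bdOff A 1 s t := by
    intro t
    by_cases ht : t = s
    · rw [ht, bdT, if_pos rfl, if_pos rfl, hdiag, add_zero]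
      congr 1
      have h1 := sum_bdOff_mul A 1 s (fun _ => 1)
      simpa using h1
    · rw [bdT, if_neg ht, if_neg ht, zero_add]
  show ∑ t, bdT A 1 s t * g t = _
  simp only [key, add_mul, Finset.sum_add_distrib, ite_mul, zero_mul]
  rw [Finset.sum_ite_eq' Finset.univ s
    (fun t => (1 - ∑ v, bdOff A 1 s (flipAt s v)) * g t)]
  simp only [Finset.mem_univ, if_pos]
  rw [sum_bdOff_mul]

/-! ### the lifted (coalescing) chain -/

/-- The lifted kernel on ancestry maps: pick `u` uniformly, then `v` with probability
`A u v / wdeg A u`, and copy the label of `u` onto `v`. -/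
noncomputable def KK {N : ℕ} (A : Matrix (Fin N) (Fin N) ℝ) :
    Matrix (Fin N → Fin N) (Fin N → Fin N) ℝ :=
  fun f f' => ∑ u : Fin N, ∑ v : Fin N,
    if f' = Function.update f v (f u) then (1 / (N : ℝ)) * (A u v / wdeg A u) else 0

lemma KK_mulVec {N : ℕ} (A : Matrix (Fin N) (Fin N) ℝ) (g : (Fin N → Fin N) → ℝ)
    (f : Fin N → Fin N) :
    (KK A).mulVec g f
      = ∑ u : Fin N, ∑ v : Fin N,
          (1 / (N : ℝ)) * (A u v / wdeg A u) * g (Function.update f v (f u)) := by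
  show ∑ f', KK A f f' * g f' = _
  simp only [KK, Finset.sum_mul, ite_mul, zero_mul]
  rw [Finset.sum_comm]
  refine Finset.sum_congr rfl fun u _ => ?_
  rw [Finset.sum_comm]
  refine Finset.sum_congr rfl fun v _ => ?_
  rw [Finset.sum_ite_eq' Finset.univ (Function.update f v (f u))
      (fun f' => 1 / (N : ℝ) * (A u v / wdeg A u) * g f')]
  simp

lemma sum_c {N : ℕ} (A : Matrix (Fin N) (Fin N) ℝ) (hdeg : ∀ u, 0 < wdeg A u)
    (hN : 0 < N) :
    (∑ u : Fin N, ∑ v : Fin N, (1 / (N : ℝ)) * (A u v / wdeg A u)) = 1 := by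
  have h1 : ∀ u : Fin N, ∑ v : Fin N, (1 / (N : ℝ)) * (A u v / wdeg A u) = 1 / (N : ℝ) := by
    intro u
    rw [← Finset.mul_sum, ← Finset.sum_div, ← wdeg, div_self (ne_of_gt (hdeg u)), mul_one]
  rw [Finset.sum_congr rfl (fun u _ => h1 u), Finset.sum_const, Finset.card_univ,
    Fintype.card_fin, nsmul_eq_mul]
  field_simp

lemma KK_nonneg {N : ℕ} (A : Matrix (Fin N) (Fin N) ℝ) (hnn : ∀ u v, 0 ≤ A u v)
    (hdeg : ∀ u, 0 < wdeg A u) (f f' : Fin N → Fin N) : 0 ≤ KK A f f' := by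
  refine Finset.sum_nonneg fun u _ => Finset.sum_nonneg fun v _ => ?_
  split
  · exact mul_nonneg (by positivity) (div_nonneg (hnn u v) (le_of_lt (hdeg u)))
  · exact le_refl 0

lemma KK_rowsum {N : ℕ} (A : Matrix (Fin N) (Fin N) ℝ) (hdeg : ∀ u, 0 < wdeg A u)
    (hN : 0 < N) (f : Fin N → Fin N) : ∑ f', KK A f f' = 1 := by
  have := KK_mulVec A (fun _ => 1) f
  simp only [mul_one] at this
  have h2 : (KK A).mulVec (fun _ => 1) f = ∑ f', KK A f f' := by
    show ∑ f', KK A f f' * 1 = _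
    simp
  rw [← h2, this, sum_c A hdeg hN]

/-! ### lumping / projection -/

/-- Project an ancestry map to a Boolean state via a marking of the labels. -/
def projB {N : ℕ} (p : Fin N → Bool) (f : Fin N → Fin N) : Fin N → Bool :=
  fun v => p (f v)

lemma projB_update {N : ℕ} (p : Fin N → Bool) (f : Fin N → Fin N) (u v : Fin N) :
    projB p (Function.update f v (f u)) = Function.update (projB p f) v (projB p f u) := by
  funext w
  by_cases hw : w = v <;> simp [projB, Function.update_apply, hw]

lemma lump_step {N : ℕ} (A : Matrix (Fin N) (Fin N) ℝ) (hdeg : ∀ u, 0 < wdeg A u)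
    (hN : 0 < N) (p : Fin N → Bool) (g : (Fin N → Bool) → ℝ) (f : Fin N → Fin N) :
    (KK A).mulVec (fun f' => g (projB p f')) f = (bdT A 1).mulVec g (projB p f) := by
  set s := projB p f with hs
  rw [KK_mulVec, bdT_mulVec]
  have hupdate : ∀ u v : Fin N, g (projB p (Function.update f v (f u)))
      = if s u = s v then g s else g (flipAt s v) := by
    intro u v
    rw [projB_update]
    by_cases h : s u = s v
    · rw [if_pos h]
      show g (Function.update s v (s u)) = g s
      rw [h, Function.update_eq_self]
    · rw [if_neg h]
      have hb : s u = !(s v) := by revert h; cases (s u) <;> cases (s v) <;> simp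
      show g (Function.update s v (s u)) = g (flipAt s v)
      rw [hb, flipAt]
  simp only [hupdate]
  rw [Finset.sum_comm]
  have hsplit : ∀ v : Fin N,
      (∑ u : Fin N, (1 / (N : ℝ)) * (A u v / wdeg A u) * (if s u = s v then g s else g (flipAt s v)))
        = (∑ u ∈ Finset.univ.filter (fun u => s u = s v),
            (1 / (N : ℝ)) * (A u v / wdeg A u)) * g s
          + bdOff A 1 s (flipAt s v) * g (flipAt s v) := by
    intro v
    have hfcong : Finset.univ.filter (fun u => ¬ s u = s v)
        = Finset.univ.filter (fun u => s u = !(s v)) := by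
      apply Finset.filter_congr
      intro u _
      cases (s u) <;> cases (s v) <;> simp
    rw [bdOff_flip]
    simp only [mul_ite]
    rw [Finset.sum_ite, ← Finset.sum_mul, hfcong, ← Finset.sum_mul]
    congr 2
    rw [Finset.mul_sum]
  simp only [hsplit]
  rw [Finset.sum_add_distrib, ← Finset.sum_mul]
  congr 2
  -- ∑ v, ∑_{u : s u = s v} c u v = 1 - ∑ v, bdOff …
  have htot : ∀ v : Fin N,
      (∑ u ∈ Finset.univ.filter (fun u => s u = s v), (1 / (N : ℝ)) * (A u v / wdeg A u))
        = (∑ u : Fin N, (1 / (N : ℝ)) * (A u v / wdeg A u)) - bdOff A 1 s (flipAt s v) := by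
    intro v
    have hfcong : Finset.univ.filter (fun u => ¬ s u = s v)
        = Finset.univ.filter (fun u => s u = !(s v)) := by
      apply Finset.filter_congr
      intro u _
      cases (s u) <;> cases (s v) <;> simp
    rw [bdOff_flip, eq_sub_iff_add_eq]
    have hsplit2 := Finset.sum_filter_add_sum_filter_not Finset.univ
      (fun u => s u = s v) (fun u => (1 / (N : ℝ)) * (A u v / wdeg A u))
    rw [← hsplit2]
    congr 1
    rw [Finset.mul_sum, ← hfcong]
  rw [Finset.sum_congr rfl (fun v _ => htot v), Finset.sum_sub_distrib,
    Finset.sum_comm, sum_c A hdeg hN]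

/-! ### intertwining -/

/-- `M` on ancestry maps intertwines with `T` on Boolean states through `projB p`. -/
def Intertwine {N : ℕ} (p : Fin N → Bool)
    (M : Matrix (Fin N → Fin N) (Fin N → Fin N) ℝ)
    (T : Matrix (Fin N → Bool) (Fin N → Bool) ℝ) : Prop :=
  ∀ g : (Fin N → Bool) → ℝ,
    M.mulVec (fun f => g (projB p f)) = fun f => T.mulVec g (projB p f)

lemma intertwine_one {N : ℕ} (p : Fin N → Bool) :
    Intertwine p (1 : Matrix (Fin N → Fin N) (Fin N → Fin N) ℝ)
      (1 : Matrix (Fin N → Bool) (Fin N → Bool) ℝ) := by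
  intro g
  rw [Matrix.one_mulVec, Matrix.one_mulVec]

lemma intertwine_mul {N : ℕ} (p : Fin N → Bool)
    {M₁ M₂ : Matrix (Fin N → Fin N) (Fin N → Fin N) ℝ}
    {T₁ T₂ : Matrix (Fin N → Bool) (Fin N → Bool) ℝ}
    (h₁ : Intertwine p M₁ T₁) (h₂ : Intertwine p M₂ T₂) :
    Intertwine p (M₁ * M₂) (T₁ * T₂) := by
  intro g
  rw [← Matrix.mulVec_mulVec, h₂ g, ← Matrix.mulVec_mulVec]
  exact h₁ (T₂.mulVec g)

lemma intertwine_pow {N : ℕ} (p : Fin N → Bool)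
    {M : Matrix (Fin N → Fin N) (Fin N → Fin N) ℝ}
    {T : Matrix (Fin N → Bool) (Fin N → Bool) ℝ}
    (h : Intertwine p M T) (n : ℕ) : Intertwine p (M ^ n) (T ^ n) := by
  induction n with
  | zero => simpa using intertwine_one p
  | succ n ih =>
      rw [pow_succ, pow_succ]
      exact intertwine_mul p ih h

lemma intertwine_ofFn_prod {N k : ℕ} (p : Fin N → Bool)
    (M : Fin k → Matrix (Fin N → Fin N) (Fin N → Fin N) ℝ)
    (T : Fin k → Matrix (Fin N → Bool) (Fin N → Bool) ℝ)
    (h : ∀ j, Intertwine p (M j) (T j)) :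
    Intertwine p (List.ofFn M).prod (List.ofFn T).prod := by
  induction k with
  | zero => simpa [List.ofFn] using intertwine_one p
  | succ k ih =>
      rw [List.ofFn_succ, List.ofFn_succ, List.prod_cons, List.prod_cons]
      exact intertwine_mul p (h 0) (ih _ _ (fun j => h j.succ))

lemma intertwine_KK {N : ℕ} (A : Matrix (Fin N) (Fin N) ℝ) (hdeg : ∀ u, 0 < wdeg A u)
    (hN : 0 < N) (p : Fin N → Bool) : Intertwine p (KK A) (bdT A 1) := by
  intro g
  funext f
  exact lump_step A hdeg hN p g f

/-! ### counting / potential for coalescence -/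

def cntv {N : ℕ} (f : Fin N → Fin N) (c : Fin N) : ℕ :=
  (Finset.univ.filter (fun v => f v = c)).card

def maxcnt {N : ℕ} (f : Fin N → Fin N) : ℕ := Finset.univ.sup (cntv f)

lemma maxcnt_le {N : ℕ} (f : Fin N → Fin N) : maxcnt f ≤ N := by
  apply Finset.sup_le
  intro c _
  calc cntv f c ≤ Finset.univ.card := Finset.card_filter_le _ _
    _ = N := by simp

lemma maxcnt_eq_iff_const {N : ℕ} (hN : 0 < N) (f : Fin N → Fin N) :
    maxcnt f = N ↔ ∃ c, f = fun _ => c := by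
  constructor
  · intro h
    have hne : (Finset.univ : Finset (Fin N)).Nonempty := by
      haveI : Nonempty (Fin N) := Fin.pos_iff_nonempty.mp hN
      exact Finset.univ_nonempty
    obtain ⟨c, -, hc⟩ := Finset.exists_max_image (Finset.univ : Finset (Fin N)) (cntv f) hne
    refine ⟨c, funext fun v => ?_⟩
    have hsup : maxcnt f ≤ cntv f c := Finset.sup_le (fun b _ => hc b (Finset.mem_univ b))
    have hcard : (Finset.univ.filter (fun v => f v = c)).card = (Finset.univ : Finset (Fin N)).card := by
      rw [Finset.card_univ, Fintype.card_fin]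
      exact le_antisymm (le_trans (Finset.card_filter_le _ _) (by simp)) (le_trans (le_of_eq h.symm) hsup)
    have := Finset.eq_univ_of_card _ hcard
    have hv : v ∈ Finset.univ.filter (fun v => f v = c) := by
      rw [this]; exact Finset.mem_univ v
    exact (Finset.mem_filter.mp hv).2
  · rintro ⟨c, rfl⟩
    have h1 : cntv (fun _ => c) c = N := by simp [cntv]
    refine le_antisymm (maxcnt_le _) ?_
    exact le_trans (le_of_eq h1.symm) (Finset.le_sup (Finset.mem_univ c))

lemma maxcnt_pos {N : ℕ} (hN : 0 < N) (f : Fin N → Fin N) : 1 ≤ maxcnt f := by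
  have hm : (⟨0, hN⟩ : Fin N) ∈ Finset.univ.filter (fun v => f v = f ⟨0, hN⟩) := by simp
  have h2 : 0 < cntv f (f ⟨0, hN⟩) := Finset.card_pos.mpr ⟨_, hm⟩
  exact le_trans h2 (Finset.le_sup (Finset.mem_univ _))

lemma KK_const_diag {N : ℕ} (A : Matrix (Fin N) (Fin N) ℝ) (hdeg : ∀ u, 0 < wdeg A u)
    (hN : 0 < N) (c : Fin N) : KK A (fun _ => c) (fun _ => c) = 1 := by
  have hupd : ∀ u v : Fin N,
      Function.update (fun _ => c) v ((fun _ : Fin N => c) u) = fun _ => c := by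
    intro u v
    funext w
    by_cases hw : w = v <;> simp [Function.update_apply, hw]
  have : KK A (fun _ => c) (fun _ => c)
      = ∑ u : Fin N, ∑ v : Fin N, (1 / (N : ℝ)) * (A u v / wdeg A u) := by
    rw [KK]
    refine Finset.sum_congr rfl fun u _ => Finset.sum_congr rfl fun v _ => ?_
    rw [hupd u v, if_pos rfl]
  rw [this, sum_c A hdeg hN]

lemma cntv_update {N : ℕ} (f : Fin N → Fin N) (c u v : Fin N) (hu : f u = c)
    (hv : f v ≠ c) : cntv (Function.update f v (f u)) c = cntv f c + 1 := by
  have hset : Finset.univ.filter (fun w => Function.update f v (f u) w = c)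
      = insert v (Finset.univ.filter (fun w => f w = c)) := by
    ext w
    simp only [Finset.mem_filter, Finset.mem_univ, true_and, Finset.mem_insert]
    by_cases hw : w = v
    · subst hw
      simp [Function.update_self, hu]
    · simp [Function.update_apply, hw]
  rw [cntv, hset, Finset.card_insert_of_notMem (by simp [hv]), cntv]

lemma KK_step_progress {N : ℕ} (A : Matrix (Fin N) (Fin N) ℝ) (hnn : ∀ u v, 0 ≤ A u v)
    (hdeg : ∀ u, 0 < wdeg A u) (hconn : (uGraph A).Connected) (hN : 0 < N)
    (f : Fin N → Fin N) (hf : ¬∃ c, f = fun _ => c) :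
    ∃ f', 0 < KK A f f' ∧ maxcnt f < maxcnt f' := by
  haveI : Nonempty (Fin N) := Fin.pos_iff_nonempty.mp hN
  obtain ⟨c, -, hc⟩ := Finset.exists_max_image (Finset.univ : Finset (Fin N)) (cntv f)
    Finset.univ_nonempty
  have hsup : maxcnt f ≤ cntv f c := Finset.sup_le (fun b _ => hc b (Finset.mem_univ b))
  have hsup' : cntv f c ≤ maxcnt f := Finset.le_sup (Finset.mem_univ c)
  -- the level set of `c` is nonempty and proper
  have hcpos : 0 < cntv f c := lt_of_lt_of_le (maxcnt_pos hN f) hsup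
  obtain ⟨a, ha⟩ := Finset.card_pos.mp hcpos
  have hac : f a = c := (Finset.mem_filter.mp ha).2
  have hproper : ∃ b, f b ≠ c := by
    by_contra hb
    push_neg at hb
    exact hf ⟨c, funext hb⟩
  obtain ⟨b, hb⟩ := hproper
  -- find a boundary dart of the walk from `a` to `b`
  obtain ⟨w⟩ := hconn.preconnected a b
  obtain ⟨d, -, hd1, hd2⟩ := w.exists_boundary_dart {v | f v = c} hac hb
  set u := d.fst
  set v := d.snd
  have hAuv : 0 < A u v := (show u ≠ v ∧ 0 < A u v ∧ 0 < A v u from d.adj).2.1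
  refine ⟨Function.update f v (f u), ?_, ?_⟩
  · -- positive transition probability
    have hterm : 0 < (1 / (N : ℝ)) * (A u v / wdeg A u) := by
      apply mul_pos
      · simp only [one_div, inv_pos]
        exact_mod_cast hN
      · exact div_pos hAuv (hdeg u)
    have hle : (1 / (N : ℝ)) * (A u v / wdeg A u) ≤ KK A f (Function.update f v (f u)) := by
      rw [KK]
      have inner : ∀ u' : Fin N,
          (0 : ℝ) ≤ ∑ v' : Fin N, if Function.update f v (f u) = Function.update f v' (f u')
              then (1 / (N : ℝ)) * (A u' v' / wdeg A u') else 0 := by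
        intro u'
        refine Finset.sum_nonneg fun v' _ => ?_
        split
        · exact mul_nonneg (by positivity) (div_nonneg (hnn u' v') (le_of_lt (hdeg u')))
        · exact le_refl 0
      refine le_trans ?_ (Finset.single_le_sum (f := fun u' =>
        ∑ v' : Fin N, if Function.update f v (f u) = Function.update f v' (f u')
          then (1 / (N : ℝ)) * (A u' v' / wdeg A u') else 0)
        (fun u' _ => inner u') (Finset.mem_univ u))
      refine le_trans ?_ (Finset.single_le_sum (f := fun v' =>
        if Function.update f v (f u) = Function.update f v' (f u)
          then (1 / (N : ℝ)) * (A u v' / wdeg A u) else 0)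
        (fun v' _ => by
          split
          · exact mul_nonneg (by positivity) (div_nonneg (hnn u v') (le_of_lt (hdeg u)))
          · exact le_refl 0) (Finset.mem_univ v))
      rw [if_pos rfl]
    exact lt_of_lt_of_le hterm hle
  · -- potential strictly increases
    have hcnt := cntv_update f c u v hd1 hd2
    calc maxcnt f ≤ cntv f c := hsup
      _ < cntv (Function.update f v (f u)) c := by rw [hcnt]; omega
      _ ≤ maxcnt (Function.update f v (f u)) := Finset.le_sup (Finset.mem_univ c)

/-! ### products of stochastic matrices -/

section Stoch

variable {ι : Type*} [Fintype ι] [DecidableEq ι]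

lemma listprod_nonneg (L : List (Matrix ι ι ℝ)) (h : ∀ M ∈ L, ∀ f f', 0 ≤ M f f') :
    ∀ f f', 0 ≤ L.prod f f' := by
  induction L with
  | nil =>
      intro f f'
      rw [List.prod_nil, Matrix.one_apply]
      split <;> norm_num
  | cons M L ih =>
      intro f f'
      rw [List.prod_cons, Matrix.mul_apply]
      refine Finset.sum_nonneg fun h' _ => mul_nonneg (h M (List.mem_cons_self) f h')
        (ih (fun M' hM' => h M' (List.mem_cons_of_mem M hM')) h' f')

lemma mul_entry_lower {ι : Type*} [Fintype ι] (M P : Matrix ι ι ℝ)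
    (hM : ∀ f f', 0 ≤ M f f') (hP : ∀ f f', 0 ≤ P f f') (f g h : ι) :
    M f g * P g h ≤ (M * P) f h := by
  rw [Matrix.mul_apply]
  exact Finset.single_le_sum (f := fun g' => M f g' * P g' h)
    (fun g' _ => mul_nonneg (hM f g') (hP g' h)) (Finset.mem_univ g)

end Stoch

/-- abstract reachability of a constant (coalesced) map along a list of "good" kernels -/
lemma reach_const {N : ℕ} (hN : 0 < N) (L : List (Matrix (Fin N → Fin N) (Fin N → Fin N) ℝ))
    (hnn : ∀ M ∈ L, ∀ f f', 0 ≤ M f f')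
    (habs : ∀ M ∈ L, ∀ c : Fin N, M (fun _ => c) (fun _ => c) = 1)
    (hprog : ∀ M ∈ L, ∀ f, (¬∃ c, f = fun _ => c) → ∃ f', 0 < M f f' ∧ maxcnt f < maxcnt f') :
    ∀ f, N - maxcnt f ≤ L.length → ∃ c, 0 < L.prod f (fun _ => c) := by
  induction L with
  | nil =>
      intro f hpot
      simp only [List.length_nil, Nat.le_zero, Nat.sub_eq_zero_iff_le] at hpot
      have hconst : ∃ c, f = fun _ => c :=
        (maxcnt_eq_iff_const hN f).mp (le_antisymm (maxcnt_le f) hpot)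
      obtain ⟨c, rfl⟩ := hconst
      refine ⟨c, ?_⟩
      rw [List.prod_nil, Matrix.one_apply, if_pos rfl]
      norm_num
  | cons M L ih =>
      intro f hpot
      have hnnM := hnn M (List.mem_cons_self)
      have hnnL : ∀ M' ∈ L, ∀ f f', 0 ≤ M' f f' :=
        fun M' hM' => hnn M' (List.mem_cons_of_mem M hM')
      have hnnP := listprod_nonneg L hnnL
      by_cases hconst : ∃ c, f = fun _ => c
      · obtain ⟨c, rfl⟩ := hconst
        have hpot0 : N - maxcnt (fun _ : Fin N => c) ≤ L.length := by
          have : maxcnt (fun _ : Fin N => c) = N := (maxcnt_eq_iff_const hN _).mpr ⟨c, rfl⟩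
          omega
        obtain ⟨c', hc'⟩ := ih hnnL (fun M' hM' => habs M' (List.mem_cons_of_mem M hM'))
          (fun M' hM' => hprog M' (List.mem_cons_of_mem M hM')) _ hpot0
        refine ⟨c', ?_⟩
        rw [List.prod_cons]
        have := mul_entry_lower M L.prod hnnM hnnP (fun _ => c) (fun _ => c) (fun _ => c')
        rw [habs M (List.mem_cons_self) c, one_mul] at this
        exact lt_of_lt_of_le hc' this
      · obtain ⟨f', hpos, hlt⟩ := hprog M (List.mem_cons_self) f hconst
        have hpot' : N - maxcnt f' ≤ L.length := by
          simp only [List.length_cons] at hpot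
          omega
        obtain ⟨c', hc'⟩ := ih hnnL (fun M' hM' => habs M' (List.mem_cons_of_mem M hM'))
          (fun M' hM' => hprog M' (List.mem_cons_of_mem M hM')) f' hpot'
        refine ⟨c', ?_⟩
        rw [List.prod_cons]
        exact lt_of_lt_of_le (mul_pos hpos hc')
          (mul_entry_lower M L.prod hnnM hnnP f f' (fun _ => c'))

/-! ### row sums -/

def RowsOne {ι : Type*} [Fintype ι] (M : Matrix ι ι ℝ) : Prop :=
  M.mulVec (fun _ => 1) = fun _ => 1

lemma RowsOne.sum {ι : Type*} [Fintype ι] {M : Matrix ι ι ℝ} (h : RowsOne M) (f : ι) :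
    ∑ f', M f f' = 1 := by
  have := congrFun h f
  simpa [Matrix.mulVec, dotProduct] using this

lemma rowsOne_mul {ι : Type*} [Fintype ι] {M P : Matrix ι ι ℝ} (hM : RowsOne M)
    (hP : RowsOne P) : RowsOne (M * P) := by
  rw [RowsOne, ← Matrix.mulVec_mulVec, hP, hM]

lemma rowsOne_one {ι : Type*} [Fintype ι] [DecidableEq ι] :
    RowsOne (1 : Matrix ι ι ℝ) := by
  rw [RowsOne, Matrix.one_mulVec]

lemma rowsOne_pow {ι : Type*} [Fintype ι] [DecidableEq ι] {M : Matrix ι ι ℝ}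
    (hM : RowsOne M) (n : ℕ) : RowsOne (M ^ n) := by
  induction n with
  | zero => simpa using rowsOne_one
  | succ n ih => rw [pow_succ]; exact rowsOne_mul ih hM

lemma rowsOne_listprod {ι : Type*} [Fintype ι] [DecidableEq ι]
    (L : List (Matrix ι ι ℝ)) (h : ∀ M ∈ L, RowsOne M) : RowsOne L.prod := by
  induction L with
  | nil => simpa using rowsOne_one
  | cons M L ih =>
      rw [List.prod_cons]
      exact rowsOne_mul (h M (List.mem_cons_self))
        (ih fun M' hM' => h M' (List.mem_cons_of_mem M hM'))

lemma rowsOne_KK {N : ℕ} (A : Matrix (Fin N) (Fin N) ℝ) (hdeg : ∀ u, 0 < wdeg A u)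
    (hN : 0 < N) : RowsOne (KK A) := by
  funext f
  show ∑ f', KK A f f' * 1 = 1
  simp only [mul_one]
  exact KK_rowsum A hdeg hN f

/-- Neutral drift theorem for switching among `k` static networks with possibly different
switching intervals `τ_1, …, τ_k`: at fitness `r = 1`, the fixation probability of a single
mutant placed on a uniformly random node equals `1/N`. -/
theorem neutral_drift_switching_many (N k : ℕ) (hN : 2 ≤ N) (hk : 1 ≤ k)
    (A : Fin k → Matrix (Fin N) (Fin N) ℝ)
    (hsym : ∀ j u v, A j u v = A j v u)
    (hnn : ∀ j u v, 0 ≤ A j u v)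
    (hdiag : ∀ j u, A j u u = 0)
    (hdeg : ∀ j u, 0 < wdeg (A j) u)
    (hconn : ∀ j, (uGraph (A j)).Connected)
    (τ : Fin k → ℕ) (hτ : ∀ j, 1 ≤ τ j)
    (x : (Fin N → Bool) → ℝ)
    (hx0 : x (fun _ => false) = 0) (hx1 : x (fun _ => true) = 1)
    (hfix : x = ((List.ofFn fun j => (bdT (A j) 1) ^ (τ j)).prod).mulVec x) :
    (∑ i : Fin N, x (fun v => decide (v = i))) = 1 ∧
    (1 / (N : ℝ)) * ∑ i : Fin N, x (fun v => decide (v = i)) = 1 / (N : ℝ) := by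
  have hN0 : 0 < N := by omega
  haveI : Nonempty (Fin N) := Fin.pos_iff_nonempty.mp hN0
  set Q : Matrix (Fin N → Fin N) (Fin N → Fin N) ℝ :=
    (List.ofFn fun j => (KK (A j)) ^ (τ j)).prod with hQdef
  set P : Matrix (Fin N → Bool) (Fin N → Bool) ℝ :=
    (List.ofFn fun j => (bdT (A j) 1) ^ (τ j)).prod with hPdef
  have hint : ∀ p : Fin N → Bool, Intertwine p Q P := fun p =>
    intertwine_ofFn_prod p _ _
      (fun j => intertwine_pow p (intertwine_KK (A j) (hdeg j) hN0 p) (τ j))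
  -- the summed dual observable
  set G : (Fin N → Fin N) → ℝ :=
    fun f => ∑ i : Fin N, x (projB (fun c => decide (c = i)) f) with hGdef
  have hGfix : Q.mulVec G = G := by
    funext f
    have hswap : Q.mulVec G f
        = ∑ i : Fin N, Q.mulVec (fun f' => x (projB (fun c => decide (c = i)) f')) f := by
      show ∑ f', Q f f' * (∑ i : Fin N, x (projB (fun c => decide (c = i)) f')) = _
      simp only [Finset.mul_sum]
      rw [Finset.sum_comm]
      rfl
    rw [hswap]
    have hterm : ∀ i : Fin N,
        Q.mulVec (fun f' => x (projB (fun c => decide (c = i)) f')) f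
          = x (projB (fun c => decide (c = i)) f) := by
      intro i
      rw [hint (fun c => decide (c = i)) x]
      exact (congrFun hfix (projB (fun c => decide (c = i)) f)).symm
    rw [Finset.sum_congr rfl (fun i _ => hterm i)]
  have hGpow : ∀ n : ℕ, (Q ^ n).mulVec G = G := by
    intro n
    induction n with
    | zero => simp [Matrix.one_mulVec]
    | succ n ih => rw [pow_succ, ← Matrix.mulVec_mulVec, hGfix, ih]
  -- big list of elementary kernels
  set inner : List (Matrix (Fin N → Fin N) (Fin N → Fin N) ℝ) :=
    (List.ofFn fun j => List.replicate (τ j) (KK (A j))).flatten with hinner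
  set bigL : List (Matrix (Fin N → Fin N) (Fin N → Fin N) ℝ) :=
    (List.replicate N inner).flatten with hbigL
  have hinnerProd : inner.prod = Q := by
    rw [hinner, List.prod_flatten, List.map_ofFn]
    have hfn : (List.prod ∘ fun j => List.replicate (τ j) (KK (A j)))
        = fun j => (KK (A j)) ^ (τ j) :=
      funext fun j => List.prod_replicate _ _
    rw [hfn]
  have hbigProd : bigL.prod = Q ^ N := by
    rw [hbigL, List.prod_flatten, List.map_replicate, List.prod_replicate, hinnerProd]
  have hmem : ∀ M ∈ bigL, ∃ j, M = KK (A j) := by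
    intro M hM
    rw [hbigL, List.mem_flatten] at hM
    obtain ⟨l, hl, hMl⟩ := hM
    rw [List.eq_of_mem_replicate hl, hinner, List.mem_flatten] at hMl
    obtain ⟨l', hl', hMl'⟩ := hMl
    obtain ⟨j, rfl⟩ := List.mem_ofFn.mp hl'
    exact ⟨j, List.eq_of_mem_replicate hMl'⟩
  have hlen : N ≤ bigL.length := by
    have hmem0 : KK (A ⟨0, hk⟩) ∈ inner := by
      rw [hinner, List.mem_flatten]
      exact ⟨List.replicate (τ ⟨0, hk⟩) (KK (A ⟨0, hk⟩)),
        List.mem_ofFn.mpr ⟨⟨0, hk⟩, rfl⟩,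
        List.mem_replicate.mpr ⟨Nat.one_le_iff_ne_zero.mp (hτ _), rfl⟩⟩
    have h1 : 1 ≤ inner.length := List.length_pos_iff.mpr (List.ne_nil_of_mem hmem0)
    have h2 : bigL.length = N * inner.length := by
      rw [hbigL, List.length_flatten, List.map_replicate, List.sum_replicate, smul_eq_mul]
    rw [h2]
    calc N = N * 1 := (mul_one N).symm
      _ ≤ N * inner.length := Nat.mul_le_mul_left N h1
  -- properties of the big product R = Q^N
  have hbignn : ∀ M ∈ bigL, ∀ f f', 0 ≤ M f f' := by
    intro M hM f f'
    obtain ⟨j, rfl⟩ := hmem M hM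
    exact KK_nonneg (A j) (hnn j) (hdeg j) f f'
  have hRnn : ∀ f f', 0 ≤ (Q ^ N) f f' := by
    rw [← hbigProd]
    exact listprod_nonneg bigL hbignn
  have hRrows : RowsOne (Q ^ N) := by
    rw [← hbigProd]
    apply rowsOne_listprod
    intro M hM
    obtain ⟨j, rfl⟩ := hmem M hM
    exact rowsOne_KK (A j) (hdeg j) hN0
  have hreach : ∀ f : Fin N → Fin N, ∃ c, 0 < (Q ^ N) f (fun _ => c) := by
    intro f
    rw [← hbigProd]
    refine reach_const hN0 bigL hbignn ?_ ?_ f (le_trans (Nat.sub_le N _) hlen)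
    · intro M hM c
      obtain ⟨j, rfl⟩ := hmem M hM
      exact KK_const_diag (A j) (hdeg j) hN0 c
    · intro M hM f hf
      obtain ⟨j, rfl⟩ := hmem M hM
      exact KK_step_progress (A j) (hnn j) (hdeg j) (hconn j) hN0 f hf
  have hRfix : (Q ^ N).mulVec G = G := hGpow N
  -- G equals 1 at coalesced (constant) maps
  have hGconst : ∀ c : Fin N, G (fun _ => c) = 1 := by
    intro c
    show (∑ i : Fin N, x (projB (fun c' => decide (c' = i)) (fun _ => c))) = 1
    rw [Finset.sum_eq_single c]
    · have hp : projB (fun c' => decide (c' = c)) (fun _ : Fin N => c) = fun _ => true := by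
        funext v; simp [projB]
      rw [hp, hx1]
    · intro i _ hi
      have hp : projB (fun c' => decide (c' = i)) (fun _ : Fin N => c) = fun _ => false := by
        funext v
        exact decide_eq_false (fun h => hi h.symm)
      rw [hp, hx0]
    · intro h
      exact absurd (Finset.mem_univ c) h
  -- maximum principle
  obtain ⟨f₀, -, hmax⟩ := Finset.exists_max_image (Finset.univ : Finset (Fin N → Fin N)) G
    Finset.univ_nonempty
  obtain ⟨f₁, -, hmin⟩ := Finset.exists_min_image (Finset.univ : Finset (Fin N → Fin N)) G
    Finset.univ_nonempty
  have hmax1 : G f₀ = 1 := by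
    have hv : (∑ f', (Q ^ N) f₀ f' * G f') = G f₀ := congrFun hRfix f₀
    have hsum0 : ∑ f', (Q ^ N) f₀ f' * (G f₀ - G f') = 0 := by
      simp only [mul_sub]
      rw [Finset.sum_sub_distrib, ← Finset.sum_mul, hRrows.sum f₀, one_mul, hv, sub_self]
    have hall := (Finset.sum_eq_zero_iff_of_nonneg (fun f' _ =>
      mul_nonneg (hRnn f₀ f') (sub_nonneg.mpr (hmax f' (Finset.mem_univ f'))))).mp hsum0
    obtain ⟨c₀, hc₀⟩ := hreach f₀
    have h0 := hall (fun _ => c₀) (Finset.mem_univ _)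
    rcases mul_eq_zero.mp h0 with h | h
    · exact absurd h (ne_of_gt hc₀)
    · rw [sub_eq_zero.mp h, hGconst c₀]
  have hmin1 : G f₁ = 1 := by
    have hv : (∑ f', (Q ^ N) f₁ f' * G f') = G f₁ := congrFun hRfix f₁
    have hsum0 : ∑ f', (Q ^ N) f₁ f' * (G f' - G f₁) = 0 := by
      simp only [mul_sub]
      rw [Finset.sum_sub_distrib, ← Finset.sum_mul, hRrows.sum f₁, one_mul, hv, sub_self]
    have hall := (Finset.sum_eq_zero_iff_of_nonneg (fun f' _ =>
      mul_nonneg (hRnn f₁ f') (sub_nonneg.mpr (hmin f' (Finset.mem_univ f'))))).mp hsum0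
    obtain ⟨c₁, hc₁⟩ := hreach f₁
    have h0 := hall (fun _ => c₁) (Finset.mem_univ _)
    rcases mul_eq_zero.mp h0 with h | h
    · exact absurd h (ne_of_gt hc₁)
    · rw [← sub_eq_zero.mp h, hGconst c₁]
  have hid : (∑ i : Fin N, x (fun v => decide (v = i))) = G (fun v => v) := rfl
  have h1 : (∑ i : Fin N, x (fun v => decide (v = i))) = 1 := by
    rw [hid]
    refine le_antisymm ?_ ?_
    · calc G (fun v => v) ≤ G f₀ := hmax _ (Finset.mem_univ _)
        _ = 1 := hmax1
    · calc (1 : ℝ) = G f₁ := hmin1.symm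
        _ ≤ G (fun v => v) := hmin _ (Finset.mem_univ _)
  exact ⟨h1, by rw [h1, mul_one]⟩
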